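/- (Tangential approach of the MRPI barrier of the imperfect SEIR model.) Let 0 < β_min ≤ β_max, 0 < γ_min ≤ γ_max, η_max > 0 and 0 < I_max < 1. Suppose S, E, I : ℝ → ℝ are differentiable on a neighbourhood of t̄ and satisfy the closed-loop equations S' = −β̂(I) S I, E' = β̂(I) S I − η_max E, I' = η_max E − γ̂(I) I there, with I(t̄) = I_max, E(t̄) = (γ_max / η_max) I_max, and S(t̄) = z₁ where 0 ≤ z₁ and β_min z₁ < γ_max. Then there exists ε > 0 such that I(t) < I_max for all t ∈ (t̄ − ε, t̄); i.e. the barrier curve ending tangentially at such a point lies in the open region {I < I_max} immediately before the tangency time. -/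

import Mathlib

/-- The affine feedback `β̂(I) = β_min (I/I_max) + β_max (1 − I/I_max)`. -/
noncomputable def betaHat (βmin βmax Imax i : ℝ) : ℝ :=
  βmin * (i / Imax) + βmax * (1 - i / Imax)

/-- The affine feedback `γ̂(I) = γ_min (1 − I/I_max) + γ_max (I/I_max)`. -/
noncomputable def gammaHat (γmin γmax Imax i : ℝ) : ℝ :=
  γmin * (1 - i / Imax) + γmax * (i / Imax)

/-!
At the tangency point the right-hand side `φ = η_max E − γ̂(I) I` of the `I`-equation vanishes,
so `I'(t̄) = 0` and `γ̂(I) I` is stationary at `t̄`. Hence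
`φ'(t̄) = η_max E'(t̄) = η_max (β_min z₁ − γ_max) I_max < 0`, so `φ = I'` is positive just before
`t̄` and `I` increases strictly up to its value `I_max` at `t̄`.
-/

open Filter Topology Set

theorem eventually_lt_nhdsLT_of_hasDerivAt_pos {f f' : ℝ → ℝ} {a : ℝ}
    (hf : ∀ᶠ t in 𝓝 a, HasDerivAt f (f' t) t) (hf' : ∀ᶠ t in 𝓝[<] a, 0 < f' t) :
    ∀ᶠ t in 𝓝[<] a, f t < f a := by
  obtain ⟨l, hla, hl⟩ :=
    mem_nhdsLT_iff_exists_Ioo_subset.mp (hf'.and (nhdsWithin_le_nhds hf))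
  filter_upwards [Ioo_mem_nhdsLT hla] with t ht
  have hcont : ContinuousOn f (Icc t a) := by
    intro x hx
    rcases hx.2.eq_or_lt with rfl | hxa
    · exact hf.self_of_nhds.continuousAt.continuousWithinAt
    · exact (hl ⟨ht.1.trans_le hx.1, hxa⟩).2.continuousAt.continuousWithinAt
  obtain ⟨c, hc, hslope⟩ := exists_hasDerivAt_eq_slope f f' ht.2 hcont
    fun x hx => (hl ⟨ht.1.trans hx.1, hx.2⟩).2
  have hpos := (hl ⟨ht.1.trans hc.1, hc.2⟩).1
  rwa [hslope, div_pos_iff_of_pos_right (sub_pos.2 ht.2), sub_pos] at hpos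

theorem eventually_pos_nhdsLT_of_hasDerivAt_neg {φ : ℝ → ℝ} {a c : ℝ}
    (hφ : HasDerivAt φ c a) (hc : c < 0) (hφa : φ a = 0) :
    ∀ᶠ t in 𝓝[<] a, 0 < φ t := by
  have hsign := eventually_nhdsWithin_sign_eq_of_deriv_neg (hφ.deriv ▸ hc) hφa
  filter_upwards [nhdsWithin_le_nhds hsign, self_mem_nhdsWithin] with t ht (hta : t < a)
  rwa [sign_pos (sub_pos.2 hta), sign_eq_one_iff] at ht

theorem eventually_lt_nhdsLT_of_second_deriv_neg {f φ : ℝ → ℝ} {a c : ℝ}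
    (hf : ∀ᶠ t in 𝓝 a, HasDerivAt f (φ t) t) (hφ : HasDerivAt φ c a) (hc : c < 0)
    (hφa : φ a = 0) :
    ∀ᶠ t in 𝓝[<] a, f t < f a :=
  eventually_lt_nhdsLT_of_hasDerivAt_pos hf (eventually_pos_nhdsLT_of_hasDerivAt_neg hφ hc hφa)

theorem betaHat_self {βmin βmax Imax : ℝ} (hImax : Imax ≠ 0) :
    betaHat βmin βmax Imax Imax = βmin := by
  simp [betaHat, div_self hImax]

theorem gammaHat_self {γmin γmax Imax : ℝ} (hImax : Imax ≠ 0) :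
    gammaHat γmin γmax Imax Imax = γmax := by
  simp [gammaHat, div_self hImax]

theorem hasDerivAt_infectionFlow_of_hasDerivAt_zero {γmin γmax ηmax Imax e' t : ℝ}
    {E I : ℝ → ℝ} (hE : HasDerivAt E e' t) (hI : HasDerivAt I 0 t) :
    HasDerivAt (fun t => ηmax * E t - gammaHat γmin γmax Imax (I t) * I t) (ηmax * e') t := by
  have hdiff : Differentiable ℝ (fun i => gammaHat γmin γmax Imax i * i) := by
    unfold gammaHat
    fun_prop
  have hstationary : HasDerivAt (fun t => gammaHat γmin γmax Imax (I t) * I t) 0 t :=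
    ((hdiff (I t)).hasDerivAt.comp t hI).congr_deriv (mul_zero _)
  exact ((hE.const_mul ηmax).sub hstationary).congr_deriv (sub_zero _)

theorem seir_imperfect_mrpi_barrier_tangential_approach_general
    (βmin βmax γmin γmax ηmax Imax tbar z₁ : ℝ)
    (hηmax : 0 < ηmax) (hI0 : 0 < Imax)
    (S E I : ℝ → ℝ)
    (hE : ∀ᶠ t in nhds tbar,
      HasDerivAt E (betaHat βmin βmax Imax (I t) * S t * I t - ηmax * E t) t)
    (hI : ∀ᶠ t in nhds tbar,
      HasDerivAt I (ηmax * E t - gammaHat γmin γmax Imax (I t) * I t) t)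
    (hItan : I tbar = Imax) (hEtan : E tbar = (γmax / ηmax) * Imax)
    (hStan : S tbar = z₁) (hz₁ : βmin * z₁ < γmax) :
    ∃ ε > 0, ∀ t ∈ Set.Ioo (tbar - ε) tbar, I t < Imax := by
  have hflow : ηmax * E tbar - gammaHat γmin γmax Imax (I tbar) * I tbar = 0 := by
    rw [hEtan, hItan, gammaHat_self hI0.ne', ← mul_assoc, mul_div_cancel₀ _ hηmax.ne', sub_self]
  have hflow' : HasDerivAt (fun t => ηmax * E t - gammaHat γmin γmax Imax (I t) * I t) _ tbar :=
    hasDerivAt_infectionFlow_of_hasDerivAt_zero hE.self_of_nhds (hflow ▸ hI.self_of_nhds)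
  have hneg : ηmax * (betaHat βmin βmax Imax (I tbar) * S tbar * I tbar - ηmax * E tbar) < 0 := by
    rw [hItan, hStan, hEtan, betaHat_self hI0.ne']
    calc _ = ηmax * ((βmin * z₁ - γmax) * Imax) := by field_simp
      _ < 0 := mul_neg_of_pos_of_neg hηmax (mul_neg_of_neg_of_pos (by linarith) hI0)
  obtain ⟨l, hl, hsub⟩ := mem_nhdsLT_iff_exists_Ioo_subset.mp
    (eventually_lt_nhdsLT_of_second_deriv_neg hI hflow' hneg hflow)
  refine ⟨tbar - l, sub_pos.2 hl, fun t ht => ?_⟩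
  rw [← hItan]
  exact hsub ⟨by linarith [ht.1], ht.2⟩

/-- Tangential approach of the MRPI barrier of the imperfect SEIR model:
a barrier curve of the closed-loop system (feedbacks `β̂`, `γ̂`, worst-case
parameter `η ≡ η_max`) ending tangentially at a point with
`E(t̄) = (γ_max/η_max) I_max`, `I(t̄) = I_max`, `S(t̄) = z₁`, `0 ≤ z₁`,
`β_min z₁ < γ_max` satisfies `I(t) < I_max` immediately before the tangency time. -/
theorem seir_imperfect_mrpi_barrier_tangential_approach
    (βmin βmax γmin γmax ηmax Imax tbar z₁ : ℝ)
    (hβmin : 0 < βmin) (hβ : βmin ≤ βmax)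
    (hγmin : 0 < γmin) (hγ : γmin ≤ γmax)
    (hηmax : 0 < ηmax) (hI0 : 0 < Imax) (hI1 : Imax < 1)
    (S E I : ℝ → ℝ)
    (hS : ∀ᶠ t in nhds tbar,
      HasDerivAt S (-(betaHat βmin βmax Imax (I t) * S t * I t)) t)
    (hE : ∀ᶠ t in nhds tbar,
      HasDerivAt E (betaHat βmin βmax Imax (I t) * S t * I t - ηmax * E t) t)
    (hI : ∀ᶠ t in nhds tbar,
      HasDerivAt I (ηmax * E t - gammaHat γmin γmax Imax (I t) * I t) t)
    (hItan : I tbar = Imax) (hEtan : E tbar = (γmax / ηmax) * Imax)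
    (hStan : S tbar = z₁) (hz₁0 : 0 ≤ z₁) (hz₁ : βmin * z₁ < γmax) :
    ∃ ε > 0, ∀ t ∈ Set.Ioo (tbar - ε) tbar, I t < Imax :=
  seir_imperfect_mrpi_barrier_tangential_approach_general βmin βmax γmin γmax ηmax Imax tbar z₁
    hηmax hI0 S E I hE hI hItan hEtan hStan hz₁
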